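/- arXiv:2403.01275 — 5 statements merged into one kernel-verified Lean document; each statement's English description precedes it below -/
import Mathlib

section
/- For any n×n alternating sign matrix (a_{i,j}), the matrix h defined by h_{i,j} = i + j − 2·Σ_{k≤i} Σ_{l≤j} a_{k,l} (for 0 ≤ i,j ≤ n) is a height function of degree n: it satisfies |h_{i+1,j} − h_{i,j}| = 1, |h_{i,j+1} − h_{i,j}| = 1, and the boundary conditions h_{i,0} = h_{0,i} = h_{n−i,n} = h_{n,n−i} = i for all 0 ≤ i ≤ n. -/
/-- Partial sum `s_{i,j} = Σ_{k≤i} Σ_{l≤j} a_{k,l}` (indices from 1). -/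
def asmSum (a : ℕ → ℕ → ℤ) (i j : ℕ) : ℤ :=
  ∑ k ∈ Finset.Icc 1 i, ∑ l ∈ Finset.Icc 1 j, a k l

/-- `a` is an `n × n` alternating sign matrix (entries indexed by `1..n`). -/
def IsASM (n : ℕ) (a : ℕ → ℕ → ℤ) : Prop :=
  (∀ i j, 1 ≤ i → i ≤ n → 1 ≤ j → j ≤ n → a i j = -1 ∨ a i j = 0 ∨ a i j = 1) ∧
  (∀ i, 1 ≤ i → i ≤ n → ∑ j ∈ Finset.Icc 1 n, a i j = 1) ∧
  (∀ j, 1 ≤ j → j ≤ n → ∑ i ∈ Finset.Icc 1 n, a i j = 1) ∧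
  (∀ i j, 1 ≤ i → i ≤ n → 1 ≤ j → j ≤ n →
    (∑ l ∈ Finset.Icc 1 j, a i l = 0 ∨ ∑ l ∈ Finset.Icc 1 j, a i l = 1)) ∧
  (∀ i j, 1 ≤ i → i ≤ n → 1 ≤ j → j ≤ n →
    (∑ k ∈ Finset.Icc 1 i, a k j = 0 ∨ ∑ k ∈ Finset.Icc 1 i, a k j = 1))

/-- `h` is a height function of degree `n` (an `(n+1) × (n+1)` matrix, indices `0..n`). -/
def IsHeight (n : ℕ) (h : ℕ → ℕ → ℤ) : Prop :=
  (∀ i j, i < n → j ≤ n → |h (i + 1) j - h i j| = 1) ∧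
  (∀ i j, i ≤ n → j < n → |h i (j + 1) - h i j| = 1) ∧
  (∀ i, i ≤ n → h i 0 = i ∧ h 0 i = i ∧ h (n - i) n = i ∧ h n (n - i) = i)

/-!
The height `h i j = i + j - 2 s i j` changes, when `i` grows by one, by `1 - 2 r` where `r` is a
prefix sum of row `i + 1`; prefix sums of an alternating sign matrix lie in `{0, 1}`, so the change
is `±1`, and likewise for columns. On the boundary, `s i n = i` and `s n j = j` because complete
rows and columns sum to `1`.
-/

open Finset

def asmHeight (a : ℕ → ℕ → ℤ) (i j : ℕ) : ℤ :=
  i + j - 2 * asmSum a i j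

section PartialSums

variable {a : ℕ → ℕ → ℤ}

@[simp]
lemma asmSum_zero_left (a : ℕ → ℕ → ℤ) (j : ℕ) : asmSum a 0 j = 0 := by
  simp [asmSum]

@[simp]
lemma asmSum_zero_right (a : ℕ → ℕ → ℤ) (i : ℕ) : asmSum a i 0 = 0 := by
  simp [asmSum]

lemma asmSum_succ_left (a : ℕ → ℕ → ℤ) (i j : ℕ) :
    asmSum a (i + 1) j = asmSum a i j + ∑ l ∈ Icc 1 j, a (i + 1) l :=
  sum_Icc_succ_top (Nat.le_add_left 1 i) _

lemma asmSum_succ_right (a : ℕ → ℕ → ℤ) (i j : ℕ) :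
    asmSum a i (j + 1) = asmSum a i j + ∑ k ∈ Icc 1 i, a k (j + 1) := by
  rw [asmSum, asmSum, ← sum_add_distrib]
  exact sum_congr rfl fun k _ => sum_Icc_succ_top (Nat.le_add_left 1 j) _

lemma asmSum_of_rows_sum_one {i m : ℕ} (hrow : ∀ k ∈ Icc 1 i, ∑ l ∈ Icc 1 m, a k l = 1) :
    asmSum a i m = i := by
  simp [asmSum, sum_congr rfl hrow]

lemma asmSum_of_cols_sum_one {m j : ℕ} (hcol : ∀ l ∈ Icc 1 j, ∑ k ∈ Icc 1 m, a k l = 1) :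
    asmSum a m j = j := by
  simp [asmSum, sum_comm (s := Icc 1 m), sum_congr rfl hcol]

end PartialSums

section Height

variable (a : ℕ → ℕ → ℤ)

lemma asmHeight_succ_left_sub (i j : ℕ) :
    asmHeight a (i + 1) j - asmHeight a i j = 1 - 2 * ∑ l ∈ Icc 1 j, a (i + 1) l := by
  simp only [asmHeight, asmSum_succ_left]
  push_cast
  ring

lemma asmHeight_succ_right_sub (i j : ℕ) :
    asmHeight a i (j + 1) - asmHeight a i j = 1 - 2 * ∑ k ∈ Icc 1 i, a k (j + 1) := by
  simp only [asmHeight, asmSum_succ_right]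
  push_cast
  ring

@[simp]
lemma asmHeight_zero_left (j : ℕ) : asmHeight a 0 j = j := by
  simp [asmHeight]

@[simp]
lemma asmHeight_zero_right (i : ℕ) : asmHeight a i 0 = i := by
  simp [asmHeight]

end Height

lemma abs_one_sub_two_mul_eq_one {s : ℤ} (hs : s = 0 ∨ s = 1) : |1 - 2 * s| = 1 := by
  rcases hs with rfl | rfl <;> norm_num

namespace IsASM

variable {n : ℕ} {a : ℕ → ℕ → ℤ}

lemma rowPrefix_eq_zero_or_one (ha : IsASM n a) {i j : ℕ} (hi₁ : 1 ≤ i) (hi : i ≤ n)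
    (hj : j ≤ n) : ∑ l ∈ Icc 1 j, a i l = 0 ∨ ∑ l ∈ Icc 1 j, a i l = 1 := by
  rcases Nat.eq_zero_or_pos j with rfl | hj₁
  · simp
  · exact ha.2.2.2.1 i j hi₁ hi hj₁ hj

lemma colPrefix_eq_zero_or_one (ha : IsASM n a) {i j : ℕ} (hi : i ≤ n) (hj₁ : 1 ≤ j)
    (hj : j ≤ n) : ∑ k ∈ Icc 1 i, a k j = 0 ∨ ∑ k ∈ Icc 1 i, a k j = 1 := by
  rcases Nat.eq_zero_or_pos i with rfl | hi₁
  · simp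
  · exact ha.2.2.2.2 i j hi₁ hi hj₁ hj

lemma asmHeight_sub_right_edge (ha : IsASM n a) {i : ℕ} (hi : i ≤ n) :
    asmHeight a (n - i) n = i := by
  have hrows : asmSum a (n - i) n = (n - i : ℕ) :=
    asmSum_of_rows_sum_one fun k hk =>
      ha.2.1 k (mem_Icc.1 hk).1 ((mem_Icc.1 hk).2.trans (Nat.sub_le n i))
  rw [asmHeight, hrows, Nat.cast_sub hi]
  ring

lemma asmHeight_bottom_sub_edge (ha : IsASM n a) {j : ℕ} (hj : j ≤ n) :
    asmHeight a n (n - j) = j := by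
  have hcols : asmSum a n (n - j) = (n - j : ℕ) :=
    asmSum_of_cols_sum_one fun l hl =>
      ha.2.2.1 l (mem_Icc.1 hl).1 ((mem_Icc.1 hl).2.trans (Nat.sub_le n j))
  rw [asmHeight, hcols, Nat.cast_sub hj]
  ring

end IsASM

theorem asm_to_height (n : ℕ) (a : ℕ → ℕ → ℤ) (ha : IsASM n a) :
    IsHeight n (fun i j => (i : ℤ) + j - 2 * asmSum a i j) := by
  change IsHeight n (asmHeight a)
  refine ⟨fun i j hi hj => ?_, fun i j hi hj => ?_, fun i hi => ?_⟩
  · rw [asmHeight_succ_left_sub]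
    exact abs_one_sub_two_mul_eq_one (ha.rowPrefix_eq_zero_or_one (Nat.le_add_left 1 i) hi hj)
  · rw [asmHeight_succ_right_sub]
    exact abs_one_sub_two_mul_eq_one (ha.colPrefix_eq_zero_or_one hi (Nat.le_add_left 1 j) hj)
  · exact ⟨asmHeight_zero_right a i, asmHeight_zero_left a i,
      ha.asmHeight_sub_right_edge hi, ha.asmHeight_bottom_sub_edge hi⟩
end

section
/- For any height function h of degree n, the matrix a defined by a_{i,j} = −(1/2)(h_{i−1,j−1} − h_{i−1,j} + h_{i,j} − h_{i,j−1}) for 1 ≤ i,j ≤ n is an n×n alternating sign matrix. -/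
/-!
Write `d i j = h (i-1) j - h i j` for the vertical steps of `h`, each `±1`. The entry
`a i j` is `(d i j - d i (j-1)) / 2`, so the partial row sums telescope to
`(d i j - d i 0) / 2 = (d i j + 1) / 2 ∈ {0, 1}`, and the full row sum is `1` because
`d i n = 1` on the right boundary. Entries are differences of consecutive partial sums,
hence lie in `{-1, 0, 1}`. Columns follow by transposing `h`, which preserves height functions.
-/

open Finset

def asmOfHeight (h : ℕ → ℕ → ℤ) (i j : ℕ) : ℤ :=
  -(h (i - 1) (j - 1) - h (i - 1) j + h i j - h i (j - 1)) / 2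

lemma asmOfHeight_transpose (h : ℕ → ℕ → ℤ) (i j : ℕ) :
    asmOfHeight (fun i j => h j i) i j = asmOfHeight h j i := by
  unfold asmOfHeight
  congr 1
  ring

lemma sum_Icc_sub_div_two {F : ℕ → ℤ} {j : ℕ} (hF : ∀ l ≤ j, F l = 1 ∨ F l = -1) :
    ∑ l ∈ Icc 1 j, (F l - F (l - 1)) / 2 = (F j - F 0) / 2 := by
  induction j with
  | zero => simp
  | succ j ih =>
    rw [sum_Icc_succ_top (by omega), ih fun l hl => hF l (by omega), Nat.add_sub_cancel]
    have := hF 0 (by omega)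
    have := hF j (by omega)
    have := hF (j + 1) le_rfl
    omega

namespace IsHeight

variable {n : ℕ} {h : ℕ → ℕ → ℤ}

lemma transpose (hh : IsHeight n h) : IsHeight n (fun i j => h j i) := by
  obtain ⟨hV, hH, hB⟩ := hh
  exact ⟨fun i j hi hj => hH j i hj hi, fun i j hi hj => hV j i hj hi,
    fun i hi => ⟨(hB i hi).2.1, (hB i hi).1, (hB i hi).2.2.2, (hB i hi).2.2.1⟩⟩

lemma apply_pred_sub_eq_one_or_neg_one (hh : IsHeight n h) {i j : ℕ} (hi : 1 ≤ i)
    (hin : i ≤ n) (hj : j ≤ n) : h (i - 1) j - h i j = 1 ∨ h (i - 1) j - h i j = -1 := by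
  have := hh.1 (i - 1) j (by omega) hj
  rw [Nat.sub_add_cancel hi] at this
  rcases abs_eq zero_le_one |>.mp this with h1 | h1 <;> omega

lemma apply_zero (hh : IsHeight n h) {i : ℕ} (hi : i ≤ n) : h i 0 = i :=
  (hh.2.2 i hi).1

lemma apply_right (hh : IsHeight n h) {i : ℕ} (hi : i ≤ n) : h i n = n - i := by
  have := (hh.2.2 (n - i) (by omega)).2.2.1
  rw [Nat.sub_sub_self hi] at this
  omega

lemma sum_row_asmOfHeight (hh : IsHeight n h) {i j : ℕ} (hi : 1 ≤ i) (hin : i ≤ n)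
    (hj : j ≤ n) :
    ∑ l ∈ Icc 1 j, asmOfHeight h i l = (h (i - 1) j - h i j + 1) / 2 :=
  calc ∑ l ∈ Icc 1 j, asmOfHeight h i l
      = ∑ l ∈ Icc 1 j, (h (i - 1) l - h i l - (h (i - 1) (l - 1) - h i (l - 1))) / 2 :=
        sum_congr rfl fun l _ => by unfold asmOfHeight; congr 1; ring
    _ = (h (i - 1) j - h i j - (h (i - 1) 0 - h i 0)) / 2 :=
        sum_Icc_sub_div_two (F := fun l => h (i - 1) l - h i l)
          fun l hl => hh.apply_pred_sub_eq_one_or_neg_one hi hin (hl.trans hj)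
    _ = (h (i - 1) j - h i j + 1) / 2 := by
        rw [hh.apply_zero (by omega), hh.apply_zero hin]
        omega

lemma sum_row_eq_zero_or_one (hh : IsHeight n h) {i j : ℕ} (hi : 1 ≤ i) (hin : i ≤ n)
    (hj : j ≤ n) :
    ∑ l ∈ Icc 1 j, asmOfHeight h i l = 0 ∨ ∑ l ∈ Icc 1 j, asmOfHeight h i l = 1 := by
  rw [hh.sum_row_asmOfHeight hi hin hj]
  rcases hh.apply_pred_sub_eq_one_or_neg_one hi hin hj with hd | hd <;> omega

lemma sum_row_eq_one (hh : IsHeight n h) {i : ℕ} (hi : 1 ≤ i) (hin : i ≤ n) :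
    ∑ l ∈ Icc 1 n, asmOfHeight h i l = 1 := by
  rw [hh.sum_row_asmOfHeight hi hin le_rfl, hh.apply_right hin, hh.apply_right (by omega)]
  omega

lemma asmOfHeight_eq_neg_one_or_zero_or_one (hh : IsHeight n h) {i j : ℕ} (hi : 1 ≤ i)
    (hin : i ≤ n) (hj : 1 ≤ j) (hjn : j ≤ n) :
    asmOfHeight h i j = -1 ∨ asmOfHeight h i j = 0 ∨ asmOfHeight h i j = 1 := by
  have hsplit := sum_Icc_succ_top (show 1 ≤ j - 1 + 1 by omega) (asmOfHeight h i)
  rw [Nat.sub_add_cancel hj] at hsplit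
  have := hh.sum_row_eq_zero_or_one hi hin hjn
  have := hh.sum_row_eq_zero_or_one hi hin (j := j - 1) (by omega)
  omega

end IsHeight

theorem height_to_asm (n : ℕ) (h : ℕ → ℕ → ℤ) (hh : IsHeight n h) :
    IsASM n (fun i j => -(h (i - 1) (j - 1) - h (i - 1) j + h i j - h i (j - 1)) / 2) := by
  show IsASM n (asmOfHeight h)
  refine ⟨fun i j hi hin hj hjn => hh.asmOfHeight_eq_neg_one_or_zero_or_one hi hin hj hjn,
    fun i hi hin => hh.sum_row_eq_one hi hin,
    fun j hj hjn => ?_,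
    fun i j hi hin _ hjn => hh.sum_row_eq_zero_or_one hi hin hjn,
    fun i j _ hin hj hjn => ?_⟩
  · simpa only [asmOfHeight_transpose] using hh.transpose.sum_row_eq_one hj hjn
  · simpa only [asmOfHeight_transpose] using hh.transpose.sum_row_eq_zero_or_one hj hjn hin
end

section
/- For the set P_n = {(i,j,k) ∈ ℤ³ : 1 ≤ i,j ≤ n−1, 1 ≤ k ≤ min(i,j,n−i,n−j)} with rank function rk(i,j,k) = |i−j| + 2k − 2, the number of elements of rank r (for 0 ≤ r ≤ n−2) is (n−r−1)(r+1); equivalently, the rank generating function is Σ_{r=0}^{n−2} (n−r−1)(r+1) q^r. -/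
/-- Membership in the poset `P_n`. -/
def memP (n : ℕ) (p : ℕ × ℕ × ℕ) : Prop :=
  1 ≤ p.1 ∧ p.1 ≤ n - 1 ∧ 1 ≤ p.2.1 ∧ p.2.1 ≤ n - 1 ∧
    1 ≤ p.2.2 ∧ p.2.2 ≤ min (min p.1 p.2.1) (min (n - p.1) (n - p.2.1))

instance (n : ℕ) (p : ℕ × ℕ × ℕ) : Decidable (memP n p) := by
  unfold memP; infer_instance

/-- The rank function `rk(i,j,k) = |i - j| + 2k - 2` (valued in `ℤ`). -/
def rkP (p : ℕ × ℕ × ℕ) : ℤ :=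
  |(p.1 : ℤ) - p.2.1| + 2 * p.2.2 - 2

/-- `p` covers `q` in `P_n`. -/
def CoversP (n : ℕ) (p q : ℕ × ℕ × ℕ) : Prop :=
  memP n p ∧ memP n q ∧
    |(p.1 : ℤ) - p.2.1| + 2 * p.2.2 = |(q.1 : ℤ) - q.2.1| + 2 * q.2.2 + 1 ∧
    |(p.1 : ℤ) - q.1| + |(p.2.1 : ℤ) - q.2.1| = 1


/-!
Write `a = min(i, j) - k + 1` and `b = i - a`. An element `(i, j, k)` of rank `r` satisfies
`i + j = 2a + r`, so it is recovered from `(a, b)` as `(a + b, a + r - b, min(b, r - b) + 1)`,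
and the constraints defining `P_n` become exactly `1 ≤ a ≤ n - r - 1` and `0 ≤ b ≤ r`.
Hence the elements of rank `r` are in bijection with an `(n - r - 1) × (r + 1)` grid.
-/

def rankLevel (n r : ℕ) : Finset (ℕ × ℕ × ℕ) :=
  (Finset.Icc 1 (n - 1) ×ˢ Finset.Icc 1 (n - 1) ×ˢ Finset.Icc 1 n).filter
    (fun p => memP n p ∧ rkP p = r)

theorem rkP_eq_natCast_iff (p : ℕ × ℕ × ℕ) (r : ℕ) :
    rkP p = r ↔ p.1 + p.2.1 + 2 * p.2.2 = 2 * min p.1 p.2.1 + r + 2 := by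
  unfold rkP
  rcases le_total p.1 p.2.1 with h | h
  · rw [abs_sub_comm, abs_of_nonneg (by omega), min_eq_left h]; omega
  · rw [abs_of_nonneg (by omega), min_eq_right h]; omega

variable {n r : ℕ}

theorem mem_rankLevel {p : ℕ × ℕ × ℕ} :
    p ∈ rankLevel n r ↔ memP n p ∧ p.1 + p.2.1 + 2 * p.2.2 = 2 * min p.1 p.2.1 + r + 2 := by
  rw [rankLevel, Finset.mem_filter, rkP_eq_natCast_iff, and_iff_right_iff_imp]
  simp only [memP, Finset.mem_product, Finset.mem_Icc]
  omega

def toGrid (p : ℕ × ℕ × ℕ) : ℕ × ℕ :=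
  (min p.1 p.2.1 + 1 - p.2.2, p.1 - (min p.1 p.2.1 + 1 - p.2.2))

def ofGrid (r : ℕ) (q : ℕ × ℕ) : ℕ × ℕ × ℕ :=
  (q.1 + q.2, q.1 + r - q.2, min q.2 (r - q.2) + 1)

def grid (n r : ℕ) : Finset (ℕ × ℕ) :=
  Finset.Icc 1 (n - r - 1) ×ˢ Finset.range (r + 1)

theorem mem_grid {q : ℕ × ℕ} :
    q ∈ grid n r ↔ 1 ≤ q.1 ∧ q.1 + r < n ∧ q.2 ≤ r := by
  simp only [grid, Finset.mem_product, Finset.mem_Icc, Finset.mem_range]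
  omega

theorem toGrid_mem_grid {p : ℕ × ℕ × ℕ} (hp : p ∈ rankLevel n r) :
    toGrid p ∈ grid n r := by
  rw [mem_rankLevel, memP] at hp
  simp only [mem_grid, toGrid]
  omega

theorem ofGrid_mem_rankLevel {q : ℕ × ℕ} (hq : q ∈ grid n r) :
    ofGrid r q ∈ rankLevel n r := by
  rw [mem_grid] at hq
  simp only [mem_rankLevel, memP, ofGrid]
  omega

theorem ofGrid_toGrid {p : ℕ × ℕ × ℕ} (hp : p ∈ rankLevel n r) :
    ofGrid r (toGrid p) = p := by
  rw [mem_rankLevel, memP] at hp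
  simp only [ofGrid, toGrid, Prod.ext_iff]
  omega

theorem toGrid_ofGrid {q : ℕ × ℕ} (hq : q ∈ grid n r) : toGrid (ofGrid r q) = q := by
  rw [mem_grid] at hq
  simp only [ofGrid, toGrid, Prod.ext_iff]
  omega

theorem card_rankLevel (n r : ℕ) : (rankLevel n r).card = (n - r - 1) * (r + 1) := by
  calc (rankLevel n r).card = (grid n r).card :=
        Finset.card_nbij' toGrid (ofGrid r) (fun _ => toGrid_mem_grid)
          (fun _ => ofGrid_mem_rankLevel) (fun _ => ofGrid_toGrid) (fun _ => toGrid_ofGrid)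
    _ = (n - r - 1) * (r + 1) := by
        rw [grid, Finset.card_product, Nat.card_Icc, Nat.add_sub_cancel, Finset.card_range]

theorem P_rank_count_general (n r : ℕ) :
    ((Finset.Icc 1 (n - 1) ×ˢ Finset.Icc 1 (n - 1) ×ˢ Finset.Icc 1 n).filter
        (fun p => memP n p ∧ rkP p = r)).card = (n - r - 1) * (r + 1) :=
  card_rankLevel n r

theorem P_rank_count (n r : ℕ) (hn : 2 ≤ n) (hr : r ≤ n - 2) :
    ((Finset.Icc 1 (n - 1) ×ˢ Finset.Icc 1 (n - 1) ×ˢ Finset.Icc 1 n).filter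
        (fun p => memP n p ∧ rkP p = r)).card = (n - r - 1) * (r + 1) :=
  P_rank_count_general n r
end

section
/- The cardinality of P_n = {(i,j,k) ∈ ℤ³ : 1 ≤ i,j ≤ n−1, 1 ≤ k ≤ min(i,j,n−i,n−j)} equals Σ_{r=0}^{n−2} (n−r−1)(r+1) = binomial(n+1, 3). -/
/-!
Slicing `P_n` by `k`, the layer at height `k` is the square `[k, n - k]²`, so `|P_n|` is the sum
of the squares `(n + 1 - 2k)²`. Dropping the bottom layer and shifting by `(1, 1, 1)` identifies
`P_{n+2}` with `P_n` plus a square of side `n + 1`, matching `C(n+3, 3) = C(n+1, 3) + (n+1)²`.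
The sum `∑ (n - r - 1)(r + 1)` grows by a triangular number `C(n+1, 2)` from `n` to `n + 1`,
which is Pascal's rule for `C(n+2, 3)`.
-/

open Finset

namespace Nat

theorem choose_two_add_choose_two_succ (n : ℕ) :
    n.choose 2 + (n + 1).choose 2 = n ^ 2 := by
  have h := choose_succ_right_eq n 1
  rw [choose_succ_succ', choose_one_right]
  rcases n with _ | n
  · simp
  · simp only [choose_one_right, add_tsub_cancel_right] at h
    nlinarith

theorem choose_three_add_two (n : ℕ) :
    (n + 3).choose 3 = (n + 1).choose 3 + (n + 1) ^ 2 := by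
  rw [← choose_two_add_choose_two_succ, choose_succ_succ' (n + 2) 2, choose_succ_succ' (n + 1) 2]
  ring

theorem sum_range_sub_mul_succ (m : ℕ) :
    ∑ r ∈ range m, (m - r) * (r + 1) = (m + 2).choose 3 := by
  induction m with
  | zero => rfl
  | succ m ih =>
    have hsplit : ∀ r ∈ range (m + 1), (m + 1 - r) * (r + 1) = (m - r) * (r + 1) + (r + 1) := by
      intro r hr
      rw [Nat.sub_add_comm (mem_range_succ_iff.mp hr), add_one_mul]
    have htriangle : ∑ r ∈ range (m + 1), (r + 1) = (m + 2).choose 2 := by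
      simpa using sum_range_add_choose m 1
    rw [sum_congr rfl hsplit, sum_add_distrib, sum_range_succ, ih, Nat.sub_self, zero_mul,
      add_zero, htriangle, choose_succ_succ' (m + 2), add_comm]

theorem sum_range_sub_sub_mul_succ (n : ℕ) :
    ∑ r ∈ range (n - 1), (n - r - 1) * (r + 1) = (n + 1).choose 3 := by
  rcases n with _ | m
  · rfl
  · simpa [Nat.sub_right_comm _ _ 1] using sum_range_sub_mul_succ m

theorem sum_range_sub_two_mul_sq (n : ℕ) :
    ∑ k ∈ range n, (n - 1 - 2 * k) ^ 2 = (n + 1).choose 3 := by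
  induction n using Nat.twoStepInduction with
  | zero => rfl
  | one => rfl
  | more n ih _ =>
    have hshift : ∀ k ∈ range n, n + 2 - 1 - 2 * (k + 1) = n - 1 - 2 * k := fun k _ => by omega
    rw [sum_range_succ', sum_range_succ, choose_three_add_two, ← ih, sum_congr rfl
      fun k hk => by rw [hshift k hk], show n + 2 - 1 - 2 * (n + 1) = 0 by omega]
    simp

end Nat

theorem memP_iff {n i j k : ℕ} :
    memP n (i, j, k) ↔ 1 ≤ k ∧ i ∈ Icc k (n - k) ∧ j ∈ Icc k (n - k) := by
  simp only [memP, mem_Icc, le_min_iff]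
  omega

theorem filter_memP_filter_snd_snd_eq {n k : ℕ} (hk : 1 ≤ k) :
    {p ∈ (Icc 1 (n - 1) ×ˢ Icc 1 (n - 1) ×ˢ Icc 1 n).filter (memP n) | p.2.2 = k} =
      Icc k (n - k) ×ˢ Icc k (n - k) ×ˢ {k} := by
  ext ⟨i, j, l⟩
  simp only [mem_filter, mem_product, mem_Icc, mem_singleton, memP_iff]
  omega

theorem card_filter_memP (n : ℕ) :
    ((Icc 1 (n - 1) ×ˢ Icc 1 (n - 1) ×ˢ Icc 1 n).filter (memP n)).card =
      ∑ k ∈ range n, (n - 1 - 2 * k) ^ 2 := by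
  have hlayer : ∀ p ∈ (Icc 1 (n - 1) ×ˢ Icc 1 (n - 1) ×ˢ Icc 1 n).filter (memP n),
      p.2.2 ∈ Ico 1 (n + 1) := fun p hp => by
    simp only [mem_filter, mem_product, mem_Icc] at hp
    simp only [mem_Ico]
    omega
  rw [card_eq_sum_card_fiberwise hlayer, sum_Ico_eq_sum_range, add_tsub_cancel_right]
  refine sum_congr rfl fun k _ => ?_
  rw [filter_memP_filter_snd_snd_eq (Nat.le_add_right 1 k), card_product, card_product, Nat.card_Icc,
    card_singleton, mul_one, sq]
  congr 1 <;> omega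

theorem P_card (n : ℕ) :
    ((Finset.Icc 1 (n - 1) ×ˢ Finset.Icc 1 (n - 1) ×ˢ Finset.Icc 1 n).filter
        (fun p => memP n p)).card
      = ∑ r ∈ Finset.range (n - 1), (n - r - 1) * (r + 1) ∧
    ((Finset.Icc 1 (n - 1) ×ˢ Finset.Icc 1 (n - 1) ×ˢ Finset.Icc 1 n).filter
        (fun p => memP n p)).card = Nat.choose (n + 1) 3 := by
  rw [card_filter_memP, Nat.sum_range_sub_two_mul_sq, Nat.sum_range_sub_sub_mul_succ]
  exact ⟨rfl, rfl⟩
end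

section
/- For any height function h of degree n, the set ι(h) = {(i,j,k) ∈ P_n : h_{i,j} ≥ |i−j| + 2k} is a down-closed set (order ideal) of the poset P_n, where the order on P_n is generated by the cover relation: (i,j,k) covers (i′,j′,k′) iff |i−j| + 2k = |i′−j′| + 2k′ + 1 and |i−i′| + |j−j′| = 1. -/
/-- The order ideal associated to a height function. -/
def iotaH (n : ℕ) (h : ℕ → ℕ → ℤ) : Set (ℕ × ℕ × ℕ) :=
  {p | memP n p ∧ |(p.1 : ℤ) - p.2.1| + 2 * p.2.2 ≤ h p.1 p.2.1}

lemma Nat.eq_succ_or_succ_eq_of_abs_add_abs_eq_one {i j i' j' : ℕ}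
    (hadj : |(i : ℤ) - i'| + |(j : ℤ) - j'| = 1) :
    (i' = i + 1 ∧ j' = j) ∨ (i = i' + 1 ∧ j' = j) ∨
      (i' = i ∧ j' = j + 1) ∨ (i' = i ∧ j = j' + 1) := by
  rcases abs_cases ((i : ℤ) - i') with ⟨hi, _⟩ | ⟨hi, _⟩ <;>
    rcases abs_cases ((j : ℤ) - j') with ⟨hj, _⟩ | ⟨hj, _⟩ <;>
    rw [hi, hj] at hadj <;> omega

lemma IsHeight.abs_sub_eq_one_of_adjacent {n : ℕ} {h : ℕ → ℕ → ℤ} (hh : IsHeight n h)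
    {i j i' j' : ℕ} (hi : i ≤ n) (hj : j ≤ n) (hi' : i' ≤ n) (hj' : j' ≤ n)
    (hadj : |(i : ℤ) - i'| + |(j : ℤ) - j'| = 1) :
    |h i' j' - h i j| = 1 := by
  obtain ⟨hrow, hcol, -⟩ := hh
  rcases Nat.eq_succ_or_succ_eq_of_abs_add_abs_eq_one hadj with
    ⟨rfl, rfl⟩ | ⟨rfl, rfl⟩ | ⟨rfl, rfl⟩ | ⟨rfl, rfl⟩
  · exact hrow i j' (by omega) hj'
  · rw [abs_sub_comm]; exact hrow i' j' (by omega) hj'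
  · exact hcol i' j hi' (by omega)
  · rw [abs_sub_comm]; exact hcol i' j' hi' (by omega)

/-- Going down a cover lowers `|i - j| + 2k` by one, while `h` drops by at most one. -/
lemma CoversP.mem_iotaH {n : ℕ} {h : ℕ → ℕ → ℤ} (hh : IsHeight n h) {p q : ℕ × ℕ × ℕ}
    (hpq : CoversP n p q) (hp : p ∈ iotaH n h) : q ∈ iotaH n h := by
  obtain ⟨-, hi, -, hj, -⟩ := hpq.1
  obtain ⟨-, hi', -, hj', -⟩ := hpq.2.1
  have hstep := hh.abs_sub_eq_one_of_adjacent (by omega) (by omega) (by omega) (by omega)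
    hpq.2.2.2
  exact ⟨hpq.2.1, by linarith [hp.2, hpq.2.2.1, (abs_le.mp hstep.le).1]⟩

theorem iota_order_ideal (n : ℕ) (h : ℕ → ℕ → ℤ) (hh : IsHeight n h)
    (p q : ℕ × ℕ × ℕ) (hp : p ∈ iotaH n h)
    (hpq : Relation.ReflTransGen (CoversP n) p q) :
    q ∈ iotaH n h := by
  induction hpq with
  | refl => exact hp
  | tail _ hcov ih => exact hcov.mem_iotaH hh ih
end
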